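/- Let ((X_1, Y_1), …, (X_{n+1}, Y_{n+1})) be an exchangeable sequence of random pairs with X_i taking values in ℝ^d and Y_i taking values in [0, 2π). Let μ̂ : ℝ^d → [0, 2π) and σ̂ : ℝ^d → (0, π] be fixed measurable functions, and define the conformity scores R_i = (π - |π - |Y_i - μ̂(X_i)||)/σ̂(X_i) for i = 1, …, n+1, assumed to be almost surely pairwise distinct. Let 0 < α < 1 be such that ⌈(1-α)(n+1)⌉ ≤ n, and let r̂ denote the ⌈(1-α)(n+1)⌉-th order statistic of R_1, …, R_n. For x ∈ ℝ^d define the prediction set C(x) = {y ∈ [-π, 3π] : μ̂(x) - r̂·σ̂(x) ≤ y ≤ μ̂(x) + r̂·σ̂(x)} if r̂·σ̂(x) < π, and C(x) = [0, 2π) otherwise. Then 1 - α ≤ P(there exists ℓ ∈ ℤ such that Y_{n+1} + 2ℓπ ∈ C(X_{n+1})) < 1 - α + 1/(n+1). -/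

import Mathlib

/-!
Since angles are only defined modulo `2π`, some translate `Y + 2ℓπ` lies in the prediction
set exactly when the angular distance from `Y` to `μ̂(X)` is at most `r̂ σ̂(X)`, i.e. when the
test score `R (n+1)` is at most `r̂`. That happens iff at most `k` of the `n + 1` scores lie
strictly below `R (n+1)`. By exchangeability every score has the same probability `p` of having
at most `k` scores strictly below it, and because the scores are almost surely distinct exactly
`k + 1` of them do, so `(n + 1) p = k + 1 = ⌈(1 - α)(n + 1)⌉`.
-/

open MeasureTheory Real Finset
open scoped ENNReal

/-- The `k`-th order statistic (0-indexed) of the tuple `f : Fin m → ℝ`. -/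
noncomputable def orderStat {m : ℕ} (f : Fin m → ℝ) (k : Fin m) : ℝ :=
  f (Tuple.sort f k)

/-- The circular conformal prediction set for a point prediction `μx`, variability
estimate `σx`, and calibrated conformity quantile `r`: if `r * σx < π` it is the arc
`[μx - r σx, μx + r σx]` reported inside `[-π, 3π]`, otherwise the whole circle `[0, 2π)`. -/
noncomputable def predSet (μx σx r : ℝ) : Set ℝ :=
  if r * σx < π then
    Set.Icc (-π) (3 * π) ∩ Set.Icc (μx - r * σx) (μx + r * σx)
  else Set.Ico 0 (2 * π)

noncomputable def angularDist (θ φ : ℝ) : ℝ := π - abs (π - |θ - φ|)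

lemma angularDist_le_pi (θ φ : ℝ) : angularDist θ φ ≤ π := by
  unfold angularDist; linarith [abs_nonneg (π - |θ - φ|)]

lemma angularDist_le_abs_add_int_mul_sub (θ φ : ℝ) (ℓ : ℤ) :
    angularDist θ φ ≤ |θ + 2 * ℓ * π - φ| := by
  unfold angularDist
  rcases eq_or_ne ℓ 0 with rfl | hℓ
  · simp only [Int.cast_zero, mul_zero, zero_mul, add_zero]
    linarith [le_abs_self (π - |θ - φ|)]
  · have hℓ : (1 : ℝ) ≤ |(ℓ : ℝ)| := by exact_mod_cast Int.one_le_abs hℓ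
    have hshift : |2 * ℓ * π| ≤ |θ + 2 * ℓ * π - φ| + |θ - φ| := by
      simpa using abs_sub (θ + 2 * ℓ * π - φ) (θ - φ)
    rw [abs_mul, abs_mul, abs_two, abs_of_pos pi_pos] at hshift
    nlinarith [neg_abs_le (π - |θ - φ|), pi_pos]

lemma exists_abs_add_int_mul_sub_eq_angularDist {θ φ : ℝ} (h : |θ - φ| < 2 * π) :
    ∃ ℓ : ℤ, |θ + 2 * ℓ * π - φ| = angularDist θ φ := by
  unfold angularDist
  rcases abs_lt.mp h with ⟨hlo, hhi⟩
  rcases le_or_gt |θ - φ| π with hnear | hfar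
  · exact ⟨0, by simp [abs_of_nonneg (sub_nonneg.mpr hnear)]⟩
  rcases le_or_gt (θ - φ) 0 with hneg | hpos
  · refine ⟨1, ?_⟩
    rw [abs_of_nonpos hneg] at hfar ⊢
    rw [abs_of_neg (by linarith : π - -(θ - φ) < 0), abs_of_nonneg (by push_cast; linarith)]
    push_cast; ring
  · refine ⟨-1, ?_⟩
    rw [abs_of_pos hpos] at hfar ⊢
    rw [abs_of_neg (by linarith : π - (θ - φ) < 0), abs_of_nonpos (by push_cast; linarith)]
    push_cast; ring

lemma exists_add_int_mul_mem_predSet_iff {θ φ σ r : ℝ} (hθ : θ ∈ Set.Ico 0 (2 * π))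
    (hφ : φ ∈ Set.Ico 0 (2 * π)) (hσ : 0 < σ) :
    (∃ ℓ : ℤ, θ + 2 * ℓ * π ∈ predSet φ σ r) ↔ angularDist θ φ / σ ≤ r := by
  rw [div_le_iff₀ hσ]
  unfold predSet
  split_ifs with harc
  · constructor
    · rintro ⟨ℓ, -, hlo, hhi⟩
      exact (angularDist_le_abs_add_int_mul_sub θ φ ℓ).trans
        (abs_sub_le_iff.mpr ⟨by linarith, by linarith⟩)
    · intro hdist
      have hθφ : |θ - φ| < 2 * π :=
        abs_lt.mpr ⟨by linarith [hθ.1, hφ.2], by linarith [hθ.2, hφ.1]⟩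
      obtain ⟨ℓ, hℓ⟩ := exists_abs_add_int_mul_sub_eq_angularDist hθφ
      have hnear := abs_le.mp (hℓ.trans_le (angularDist_le_pi θ φ))
      have hwithin := abs_le.mp (hℓ.trans_le hdist)
      exact ⟨ℓ, ⟨by linarith [hφ.1], by linarith [hφ.2]⟩, by linarith, by linarith⟩
  · exact iff_of_true ⟨0, by simpa using hθ⟩
      ((angularDist_le_pi θ φ).trans (not_lt.mp harc))

lemma le_orderStat_iff_card_lt {m : ℕ} (f : Fin m → ℝ) (k : Fin m) (c : ℝ) :
    c ≤ orderStat f k ↔ #{i | f i < c} ≤ k := by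
  have hsorted :=
    Tuple.lt_card_lt_iff_apply_lt_of_monotone (j := k) (a := c) (Tuple.monotone_sort f)
  have hperm : #{i | f (Tuple.sort f i) < c} = #{i | f i < c} :=
    card_equiv (Tuple.sort f) (by simp)
  rw [← not_lt, orderStat, ← Function.comp_apply (f := f), ← hsorted]
  simp only [Function.comp_apply, hperm, not_lt]

namespace Tuple

variable {α : Type*} [LinearOrder α] {m : ℕ}

def rank (f : Fin m → α) (j : Fin m) : ℕ := #{i | f i < f j}

lemma rank_comp_perm (f : Fin m → α) (σ : Equiv.Perm (Fin m)) (j : Fin m) :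
    rank (f ∘ σ) j = rank f (σ j) :=
  card_equiv σ (by simp)

lemma rank_of_strictMono {f : Fin m → α} (hf : StrictMono f) (j : Fin m) : rank f j = j := by
  rw [rank, ← Fin.card_Iio j]
  congr 1
  ext i
  simp [hf.lt_iff_lt]

lemma card_rank_le {f : Fin m → α} (hf : Function.Injective f) {k : ℕ} (hk : k < m) :
    #{j | rank f j ≤ k} = k + 1 := by
  have hsort : StrictMono (f ∘ sort f) :=
    (monotone_sort f).strictMono_of_injective (hf.comp (sort f).injective)
  calc #{j | rank f j ≤ k}
      = #{j | rank f (sort f j) ≤ k} := (card_equiv (sort f) (by simp)).symm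
    _ = #{j : Fin m | j < k + 1} := by
        simp_rw [← rank_comp_perm, rank_of_strictMono hsort, Nat.lt_succ_iff]
    _ = k + 1 := by rw [Fin.card_filter_val_lt]; omega

lemma rank_last_le_iff_le_orderStat (f : Fin (m + 1) → ℝ) (k : Fin m) :
    rank f (Fin.last m) ≤ k ↔
      f (Fin.last m) ≤ orderStat (fun i : Fin m => f i.castSucc) k := by
  rw [le_orderStat_iff_card_lt, rank, card_filter, card_filter, Fin.sum_univ_castSucc]
  simp

end Tuple

section Exchangeable

variable {Ω β : Type*} [MeasurableSpace Ω] [MeasurableSpace β] {m : ℕ}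

def Exchangeable (P : Measure Ω) (Z : Ω → Fin m → β) : Prop :=
  ∀ σ : Equiv.Perm (Fin m), P.map (fun ω i => Z ω (σ i)) = P.map Z

variable {P : Measure Ω} {Z : Ω → Fin m → β}

lemma measurable_comp_perm (hZ : Measurable Z) (σ : Equiv.Perm (Fin m)) :
    Measurable fun ω i => Z ω (σ i) :=
  measurable_pi_lambda _ fun i => (measurable_pi_apply (σ i)).comp hZ

lemma Exchangeable.comp {γ : Type*} [MeasurableSpace γ] (hexch : Exchangeable P Z)
    (hZ : Measurable Z) {g : β → γ} (hg : Measurable g) :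
    Exchangeable P fun ω i => g (Z ω i) := by
  intro σ
  have hG : Measurable fun (z : Fin m → β) i => g (z i) :=
    measurable_pi_lambda _ fun i => hg.comp (measurable_pi_apply i)
  calc P.map (fun ω i => g (Z ω (σ i)))
      = (P.map fun ω i => Z ω (σ i)).map fun z i => g (z i) :=
        (Measure.map_map hG (measurable_comp_perm hZ σ)).symm
    _ = (P.map Z).map fun z i => g (z i) := by rw [hexch σ]
    _ = P.map fun ω i => g (Z ω i) := Measure.map_map hG hZ

lemma Exchangeable.measure_preimage_comp_perm (hexch : Exchangeable P Z) (hZ : Measurable Z)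
    (σ : Equiv.Perm (Fin m)) {S : Set (Fin m → β)} (hS : MeasurableSet S) :
    P ((fun ω i => Z ω (σ i)) ⁻¹' S) = P (Z ⁻¹' S) := by
  rw [← Measure.map_apply (measurable_comp_perm hZ σ) hS, hexch σ, Measure.map_apply hZ hS]

end Exchangeable

section Rank

variable {Ω α : Type*} [MeasurableSpace Ω] [LinearOrder α] [TopologicalSpace α]
  [OrderClosedTopology α] [SecondCountableTopology α] [MeasurableSpace α]
  [OpensMeasurableSpace α]
  {m : ℕ} {P : Measure Ω} {R : Ω → Fin m → α}

lemma Tuple.measurable_rank (j : Fin m) : Measurable fun f : Fin m → α => Tuple.rank f j := by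
  simp only [Tuple.rank, card_filter]
  exact Finset.measurable_sum _ fun i _ => Measurable.ite
    (measurableSet_lt (measurable_pi_apply i) (measurable_pi_apply j)) measurable_const
    measurable_const

lemma sum_measure_rank_le_eq [IsProbabilityMeasure P] (hR : Measurable R)
    (hinj : ∀ᵐ ω ∂P, Function.Injective (R ω)) {k : ℕ} (hk : k < m) :
    ∑ j, P {ω | Tuple.rank (R ω) j ≤ k} = k + 1 := by
  have hmeas : ∀ j, MeasurableSet {ω | Tuple.rank (R ω) j ≤ k} := fun j =>
    measurableSet_le ((Tuple.measurable_rank j).comp hR) measurable_const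
  calc ∑ j, P {ω | Tuple.rank (R ω) j ≤ k}
      = ∫⁻ ω, ∑ j, {ω | Tuple.rank (R ω) j ≤ k}.indicator 1 ω ∂P := by
        rw [lintegral_finsetSum _ fun j _ => measurable_one.indicator (hmeas j)]
        simp_rw [lintegral_indicator_one (hmeas _)]
    _ = ∫⁻ _, (k + 1 : ℝ≥0∞) ∂P := by
        refine lintegral_congr_ae (hinj.mono fun ω hω => ?_)
        simp only [Set.indicator_apply, Set.mem_ofPred_eq, Pi.one_apply, sum_boole,
          Tuple.card_rank_le hω hk]
        push_cast; rfl
    _ = k + 1 := by simp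

theorem Exchangeable.measure_rank_le [IsProbabilityMeasure P] (hexch : Exchangeable P R)
    (hR : Measurable R) (hinj : ∀ᵐ ω ∂P, Function.Injective (R ω)) {k : ℕ} (hk : k < m)
    (j : Fin m) : P {ω | Tuple.rank (R ω) j ≤ k} = (k + 1 : ℕ) / (m : ℝ≥0∞) := by
  have hsame : ∀ i, P {ω | Tuple.rank (R ω) i ≤ k} = P {ω | Tuple.rank (R ω) j ≤ k} := by
    intro i
    have hswap : {ω | Tuple.rank (R ω) i ≤ k} =
        (fun ω i' => R ω (Equiv.swap j i i')) ⁻¹' {f | Tuple.rank f j ≤ k} := by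
      ext ω
      change _ ↔ Tuple.rank (R ω ∘ Equiv.swap j i) j ≤ k
      rw [Tuple.rank_comp_perm, Equiv.swap_apply_left]
      rfl
    rw [hswap, hexch.measure_preimage_comp_perm hR _
      (measurableSet_le (Tuple.measurable_rank j) measurable_const)]
    rfl
  have hsum := sum_measure_rank_le_eq hR hinj hk
  rw [Finset.sum_congr rfl fun i _ => hsame i, sum_const, card_univ, Fintype.card_fin,
    nsmul_eq_mul] at hsum
  rw [ENNReal.eq_div_iff (by simp; omega) (by simp), hsum]
  push_cast; rfl

end Rank

lemma ofReal_le_div_and_div_lt_of_eq_ceil {a : ℝ} {K N : ℕ} (hN : 0 < N)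
    (hK : (K : ℤ) = ⌈a * N⌉) :
    ENNReal.ofReal a ≤ K / N ∧ (K : ℝ≥0∞) / N < ENNReal.ofReal (a + 1 / N) := by
  have hN' : (0 : ℝ) < N := by exact_mod_cast hN
  have hKreal : (K : ℝ) = (⌈a * N⌉ : ℝ) := by exact_mod_cast hK
  have hlo : a ≤ K / N := by rw [le_div_iff₀ hN', hKreal]; exact Int.le_ceil _
  have hhi : (K : ℝ) / N < a + 1 / N := by
    rw [div_lt_iff₀ hN', add_mul, one_div_mul_cancel hN'.ne', hKreal]
    exact Int.ceil_lt_add_one _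
  rw [← ENNReal.ofReal_natCast K, ← ENNReal.ofReal_natCast N, ← ENNReal.ofReal_div_of_pos hN']
  exact ⟨ENNReal.ofReal_le_ofReal hlo,
    (ENNReal.ofReal_lt_ofReal_iff ((by positivity : (0 : ℝ) ≤ K / N).trans_lt hhi)).mpr hhi⟩

theorem circular_split_conformal_two_sided_general {Ω : Type*} [MeasurableSpace Ω]
    (P : Measure Ω) [IsProbabilityMeasure P] (n d : ℕ)
    (X : Ω → Fin (n + 1) → (Fin d → ℝ)) (Y : Ω → Fin (n + 1) → ℝ)
    (hX : Measurable X) (hY : Measurable Y)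
    (hexch : ∀ π' : Equiv.Perm (Fin (n + 1)),
      Measure.map (fun ω => fun i => (X ω (π' i), Y ω (π' i))) P =
        Measure.map (fun ω => fun i => (X ω i, Y ω i)) P)
    (hYrange : ∀ ω i, Y ω i ∈ Set.Ico 0 (2 * π))
    (μhat σhat : (Fin d → ℝ) → ℝ) (hμmeas : Measurable μhat) (hσmeas : Measurable σhat)
    (hμrange : ∀ x, μhat x ∈ Set.Ico 0 (2 * π))
    (hσrange : ∀ x, σhat x ∈ Set.Ioc 0 π)
    (R : Ω → Fin (n + 1) → ℝ)
    (hRdef : ∀ ω i, R ω i = (π - abs (π - |Y ω i - μhat (X ω i)|)) / σhat (X ω i))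
    (hdist : ∀ᵐ ω ∂P, Function.Injective (R ω))
    (α : ℝ)
    (k : Fin n) (hk : ((k : ℕ) : ℤ) + 1 = ⌈(1 - α) * ((n : ℝ) + 1)⌉) :
    ENNReal.ofReal (1 - α) ≤
      P {ω | ∃ ℓ : ℤ, Y ω (Fin.last n) + 2 * ℓ * π ∈
        predSet (μhat (X ω (Fin.last n))) (σhat (X ω (Fin.last n)))
          (orderStat (fun i : Fin n => R ω i.castSucc) k)} ∧
    P {ω | ∃ ℓ : ℤ, Y ω (Fin.last n) + 2 * ℓ * π ∈
        predSet (μhat (X ω (Fin.last n))) (σhat (X ω (Fin.last n)))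
          (orderStat (fun i : Fin n => R ω i.castSucc) k)} <
      ENNReal.ofReal (1 - α + 1 / ((n : ℝ) + 1)) := by
  have hevent : {ω | ∃ ℓ : ℤ, Y ω (Fin.last n) + 2 * ℓ * π ∈
      predSet (μhat (X ω (Fin.last n))) (σhat (X ω (Fin.last n)))
        (orderStat (fun i : Fin n => R ω i.castSucc) k)} =
      {ω | Tuple.rank (R ω) (Fin.last n) ≤ k} := by
    ext ω
    simp only [Set.mem_ofPred_eq]
    rw [exists_add_int_mul_mem_predSet_iff (hYrange ω _) (hμrange _) (hσrange _).1,
      Tuple.rank_last_le_iff_le_orderStat, hRdef]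
    rfl
  set score : (Fin d → ℝ) × ℝ → ℝ := fun p => angularDist p.2 (μhat p.1) / σhat p.1
  have hRscore : R = fun ω i => score (X ω i, Y ω i) := funext₂ hRdef
  have hXY : Measurable fun ω i => (X ω i, Y ω i) :=
    measurable_pi_lambda _ fun i => ((measurable_pi_apply i).comp hX).prodMk
      ((measurable_pi_apply i).comp hY)
  have hscore : Measurable score := by unfold score angularDist; fun_prop
  have hR : Measurable R :=
    hRscore ▸ measurable_pi_lambda _ fun i => hscore.comp ((measurable_pi_apply i).comp hXY)
  have hexchR : Exchangeable P R :=
    hRscore ▸ Exchangeable.comp (Z := fun ω i => (X ω i, Y ω i)) hexch hXY hscore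
  rw [hevent, hexchR.measure_rank_le hR hdist (by omega) (Fin.last n)]
  have := ofReal_le_div_and_div_lt_of_eq_ceil (a := 1 - α) (K := k + 1) (N := n + 1)
    n.succ_pos (by push_cast; exact hk)
  push_cast at this ⊢
  exact this

/-- Split conformal prediction for circular responses, two-sided coverage bound:
for exchangeable pairs `(X i, Y i)`, circular conformity scores
`R i = (π - |π - |Y i - μ̂(X i)||)/σ̂(X i)` that are almost surely pairwise
distinct, and `r̂` the `⌈(1-α)(n+1)⌉`-th order statistic of the first `n` scores
(witnessed by `k : Fin n`, 0-indexed), the probability that some periodic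
translate of `Y (n+1)` lies in the prediction set is at least `1 - α` and
strictly less than `1 - α + 1/(n+1)`. -/
theorem circular_split_conformal_two_sided {Ω : Type*} [MeasurableSpace Ω]
    (P : Measure Ω) [IsProbabilityMeasure P] (n d : ℕ)
    (X : Ω → Fin (n + 1) → (Fin d → ℝ)) (Y : Ω → Fin (n + 1) → ℝ)
    (hX : Measurable X) (hY : Measurable Y)
    (hexch : ∀ π' : Equiv.Perm (Fin (n + 1)),
      Measure.map (fun ω => fun i => (X ω (π' i), Y ω (π' i))) P =
        Measure.map (fun ω => fun i => (X ω i, Y ω i)) P)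
    (hYrange : ∀ ω i, Y ω i ∈ Set.Ico 0 (2 * π))
    (μhat σhat : (Fin d → ℝ) → ℝ) (hμmeas : Measurable μhat) (hσmeas : Measurable σhat)
    (hμrange : ∀ x, μhat x ∈ Set.Ico 0 (2 * π))
    (hσrange : ∀ x, σhat x ∈ Set.Ioc 0 π)
    (R : Ω → Fin (n + 1) → ℝ)
    (hRdef : ∀ ω i, R ω i = (π - abs (π - |Y ω i - μhat (X ω i)|)) / σhat (X ω i))
    (hdist : ∀ᵐ ω ∂P, Function.Injective (R ω))
    (α : ℝ) (hα0 : 0 < α) (hα1 : α < 1)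
    (k : Fin n) (hk : ((k : ℕ) : ℤ) + 1 = ⌈(1 - α) * ((n : ℝ) + 1)⌉) :
    ENNReal.ofReal (1 - α) ≤
      P {ω | ∃ ℓ : ℤ, Y ω (Fin.last n) + 2 * ℓ * π ∈
        predSet (μhat (X ω (Fin.last n))) (σhat (X ω (Fin.last n)))
          (orderStat (fun i : Fin n => R ω i.castSucc) k)} ∧
    P {ω | ∃ ℓ : ℤ, Y ω (Fin.last n) + 2 * ℓ * π ∈
        predSet (μhat (X ω (Fin.last n))) (σhat (X ω (Fin.last n)))
          (orderStat (fun i : Fin n => R ω i.castSucc) k)} <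
      ENNReal.ofReal (1 - α + 1 / ((n : ℝ) + 1)) :=
  circular_split_conformal_two_sided_general P n d X Y hX hY hexch hYrange μhat σhat hμmeas hσmeas
    hμrange hσrange R hRdef hdist α k hk
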